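/- arXiv:1812.00260 — 2 statements merged into one kernel-verified Lean document; each statement's English description precedes it below -/
import Mathlib

section
/- (Finite-dimensional law and exchangeability of the beta-Stacy urn system.) For every n ≥ 1 and every t_{1:n} ∈ ℕ₊^n, ρ(T_1 = t_1, …, T_n = t_n) = ∏_{s≥1} [α_s^{(d_s)} · β_s^{(w_s)} / (α_s + β_s)^{(d_s + w_s)}], where d_s = #{i ≤ n : t_i = s}, w_s = #{i ≤ n : t_i > s}, and x^{(k)} = x(x+1)⋯(x+k−1) denotes the ascending factorial (the product over s has only finitely many factors ≠ 1). In particular this probability is invariant under every permutation of (t_1,…,t_n), so the sequence (T_n)_{n≥1} generated by the beta-Stacy urn system is exchangeable. -/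
open MeasureTheory

/-! # Setup

`c(s) > 0` for every `s ∈ ℕ+` and `F0` is a probability mass function on `ℕ+` with
`F0({s}) > 0` for all `s`; set `α_s = c(s)F0({s})` and `β_s = c(s)F0((s,∞))`.  `ρ` is the
law on `ℕ+^{ℕ+}` (paths `ω : ℕ → ℕ+`, `ω (n-1)` being the `n`-th generated value `T_n`)
of the sequence generated by the beta-Stacy system of Pólya urns, characterized by its
predictive survival functions
`ρ(T_{n+1} > t | T_{1:n} = t_{1:n}) = ∏_{s=1}^t [1 - (α_s + d_s)/(α_s + β_s + d_s + w_s)]`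
with `d_s = #{i ≤ n : t_i = s}` and `w_s = #{i ≤ n : t_i > s}` (hypothesis `hρ`). -/

instance : MeasurableSpace ℕ+ := ⊤

noncomputable def survF0 (F0 : ℕ+ → ENNReal) (s : ℕ+) : ENNReal :=
  ∑' r : ℕ+, if s < r then F0 r else 0

/-- The ascending factorial `x^{(k)} = x (x+1) ⋯ (x+k-1)`. -/
noncomputable def ascFac (x : ENNReal) (k : ℕ) : ENNReal :=
  ∏ h ∈ Finset.range k, (x + h)

/-- `d_s = #{i < n : t_i = s}` for the first `n` values of `tv`. -/
noncomputable def dCount (tv : ℕ → ℕ+) (n : ℕ) (s : ℕ+) : ℕ :=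
  ((Finset.range n).filter (fun i => tv i = s)).card

/-- `w_s = #{i < n : t_i > s}` for the first `n` values of `tv`. -/
noncomputable def wCount (tv : ℕ → ℕ+) (n : ℕ) (s : ℕ+) : ℕ :=
  ((Finset.range n).filter (fun i => s < tv i)).card

/-!
Given the past `t_{1:n}`, the next draw equals `t` with probability `∏_{s<t} (1 - q_s) · q_t`,
where `q_s = (α_s + d_s)/(α_s + β_s + d_s + w_s)` is the stopping proportion of the `s`-th urn.
Appending `t` to the past raises `w_s` by one for `s < t` and `d_t` by one, and leaves the other
counts alone. Raising `w_s` multiplies `α_s^{(d_s)} β_s^{(w_s)} / (α_s + β_s)^{(d_s + w_s)}` by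
`(β_s + w_s)/(α_s + β_s + d_s + w_s) = 1 - q_s` and raising `d_s` multiplies it by `q_s`, so the
product formula is carried from `n` to `n + 1` by the chain rule. It depends on `t_{1:n}` only
through the counts `d_s, w_s`, which no permutation changes.
-/

open Finset
open scoped ENNReal

lemma ascFac_zero (x : ℝ≥0∞) : ascFac x 0 = 1 := prod_range_zero _

lemma ascFac_succ (x : ℝ≥0∞) (k : ℕ) : ascFac x (k + 1) = ascFac x k * (x + k) :=
  prod_range_succ _ _

lemma ascFac_ne_zero {x : ℝ≥0∞} (hx : x ≠ 0) (k : ℕ) : ascFac x k ≠ 0 :=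
  prod_ne_zero_iff.2 fun _ _ => (add_pos_of_pos_of_nonneg (pos_iff_ne_zero.2 hx) bot_le).ne'

lemma ENNReal.one_sub_div_add {a b : ℝ≥0∞} (ha : a ≠ ∞) (hb : b ≠ ∞) (hab : a + b ≠ 0) :
    1 - a / (a + b) = b / (a + b) := by
  have hsum : a / (a + b) + b / (a + b) = 1 := by
    rw [ENNReal.div_add_div_same, ENNReal.div_self hab (ENNReal.add_ne_top.2 ⟨ha, hb⟩)]
  exact ENNReal.sub_eq_of_eq_add (ENNReal.div_ne_top ha hab) (by rw [← hsum, add_comm])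

lemma ENNReal.sub_mul_one_sub {a q : ℝ≥0∞} (ha : a ≠ ∞) (hq : q ≤ 1) :
    a - a * (1 - q) = a * q := by
  rw [ENNReal.mul_sub fun _ _ => ha, mul_one,
    ENNReal.sub_sub_cancel ha (mul_le_of_le_one_right' hq)]

noncomputable def urnWeight (α β : ℝ≥0∞) (d w : ℕ) : ℝ≥0∞ :=
  ascFac α d * ascFac β w / ascFac (α + β) (d + w)

section urnWeight

variable {α β : ℝ≥0∞} (d w : ℕ)

@[simp]
lemma urnWeight_zero_zero : urnWeight α β 0 0 = 1 := by
  simp [urnWeight, ascFac_zero]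

lemma ascFac_add_succ :
    ascFac (α + β) (d + w + 1) = ascFac (α + β) (d + w) * (α + β + d + w) := by
  rw [ascFac_succ, Nat.cast_add, ← add_assoc]

lemma add_natCast_add_natCast_ne_zero (hαβ : α + β ≠ 0) : α + β + d + w ≠ 0 :=
  fun h => hαβ (add_eq_zero.1 (add_eq_zero.1 h).1).1

lemma urnWeight_succ_left (hαβ : α + β ≠ 0) :
    urnWeight α β (d + 1) w = urnWeight α β d w * ((α + d) / (α + β + d + w)) := by
  rw [urnWeight, urnWeight, Nat.add_right_comm, ascFac_add_succ, ascFac_succ, mul_right_comm,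
    ENNReal.mul_div_mul_comm (.inl (ascFac_ne_zero hαβ _))
      (.inr (add_natCast_add_natCast_ne_zero d w hαβ))]

lemma urnWeight_succ_right (hα : α ≠ ∞) (hβ : β ≠ ∞) (hαβ : α + β ≠ 0) :
    urnWeight α β d (w + 1) = urnWeight α β d w * (1 - (α + d) / (α + β + d + w)) := by
  have hsplit : α + β + d + w = (α + d) + (β + w) := by ring
  have hD := add_natCast_add_natCast_ne_zero d w hαβ
  rw [urnWeight, urnWeight, ← add_assoc, ascFac_add_succ, ascFac_succ, ← mul_assoc,
    ENNReal.mul_div_mul_comm (.inl (ascFac_ne_zero hαβ _)) (.inr hD), hsplit,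
    ENNReal.one_sub_div_add (by simp [hα]) (by simp [hβ]) (hsplit ▸ hD)]

end urnWeight

section Counts

variable (tv : ℕ → ℕ+) (n : ℕ) (s : ℕ+)

lemma dCount_succ : dCount tv (n + 1) s = dCount tv n s + if tv n = s then 1 else 0 := by
  simp only [dCount, range_add_one, filter_insert]
  split_ifs <;> simp [card_insert_of_notMem]

lemma wCount_succ : wCount tv (n + 1) s = wCount tv n s + if s < tv n then 1 else 0 := by
  simp only [wCount, range_add_one, filter_insert]
  split_ifs <;> simp [card_insert_of_notMem]

variable {tv n s}

lemma dCount_eq_zero (h : ∀ i < n, tv i < s) : dCount tv n s = 0 :=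
  card_eq_zero.2 <| filter_eq_empty_iff.2 fun i hi => (h i (mem_range.1 hi)).ne

lemma wCount_eq_zero (h : ∀ i < n, tv i < s) : wCount tv n s = 0 :=
  card_eq_zero.2 <| filter_eq_empty_iff.2 fun i hi => (h i (mem_range.1 hi)).not_gt

end Counts

lemma Finset.prod_range_ite_lt_ite_eq {M : Type*} [CommMonoid M] (f g : ℕ → M) {t N : ℕ}
    (htN : t < N) :
    ∏ j ∈ range N, (if j < t then f j else if j = t then g j else 1) =
      (∏ j ∈ range t, f j) * g t := by
  rw [prod_ite, prod_ite_eq' _ t g, if_pos (by simp [htN])]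
  congr 2
  ext j
  simp only [mem_filter, mem_range]
  omega

lemma tprod_pnat_eq_prod_range {M : Type*} [CommMonoid M] [TopologicalSpace M]
    {f : ℕ+ → M} {N : ℕ} (hf : ∀ s : ℕ+, N ≤ s.natPred → f s = 1) :
    ∏' s, f s = ∏ j ∈ range N, f j.succPNat := by
  rw [tprod_eq_prod (s := (range N).map ⟨Nat.succPNat, Nat.succPNat_injective⟩), prod_map]
  · rfl
  · refine fun s hs => hf s (not_lt.1 fun hsN => hs (mem_map.2 ⟨_, mem_range.2 hsN, ?_⟩))
    exact s.succPNat_natPred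

def prefixCylinder (n : ℕ) (tv : ℕ → ℕ+) : Set (ℕ → ℕ+) := {ω | ∀ k < n, ω k = tv k}

lemma measurableSet_prefixCylinder (n : ℕ) (tv : ℕ → ℕ+) :
    MeasurableSet (prefixCylinder n tv) := by
  simp only [prefixCylinder, Set.ofPred_forall]
  exact .iInter fun k => .iInter fun _ => measurableSet_eq_fun (measurable_pi_apply k)
    measurable_const

section Urn

variable (α β : ℕ+ → ℝ≥0∞)

/-- The chance that the draw after `tv 0, …, tv (n - 1)` stops at `s`, given that it gets past
`s - 1`. -/
noncomputable def urnHazard (tv : ℕ → ℕ+) (n : ℕ) (s : ℕ+) : ℝ≥0∞ :=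
  (α s + dCount tv n s) / (α s + β s + dCount tv n s + wCount tv n s)

/-- The predictive probability that the next draw equals `t + 1`. -/
noncomputable def urnPredictive (tv : ℕ → ℕ+) (n t : ℕ) : ℝ≥0∞ :=
  (∏ j ∈ range t, (1 - urnHazard α β tv n j.succPNat)) * urnHazard α β tv n t.succPNat

def IsBetaStacyUrnLaw (ρ : Measure (ℕ → ℕ+)) : Prop :=
  ∀ (n t : ℕ) (tv : ℕ → ℕ+), ρ (prefixCylinder n tv ∩ {ω | t < (ω n : ℕ)}) =
    ρ (prefixCylinder n tv) * ∏ s ∈ range t, (1 - urnHazard α β tv n s.succPNat)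

variable {α β}

lemma urnHazard_le_one (tv : ℕ → ℕ+) (n : ℕ) (s : ℕ+) : urnHazard α β tv n s ≤ 1 :=
  ENNReal.div_le_of_le_mul <| by rw [one_mul]; exact le_add_right (by gcongr; exact le_self_add)

lemma prefixCylinder_succ (tv : ℕ → ℕ+) (n : ℕ) :
    prefixCylinder (n + 1) tv = (prefixCylinder n tv ∩ {ω | (tv n).natPred < (ω n : ℕ)}) \
      (prefixCylinder n tv ∩ {ω | (tv n).natPred + 1 < (ω n : ℕ)}) := by
  have htv := (tv n).pos
  ext ω
  simp only [prefixCylinder, Set.mem_sdiff, Set.mem_inter_iff, Set.mem_ofPred_eq,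
    Nat.lt_succ_iff_lt_or_eq, or_imp, forall_and, forall_eq, PNat.natPred, ← PNat.coe_inj]
  constructor
  · rintro ⟨hpre, hn⟩
    exact ⟨⟨hpre, by omega⟩, fun h => by omega⟩
  · rintro ⟨⟨hpre, hn⟩, hnot⟩
    exact ⟨hpre, by have := not_lt.1 fun h => hnot ⟨hpre, h⟩; omega⟩

lemma measure_prefixCylinder_succ {ρ : Measure (ℕ → ℕ+)} [IsFiniteMeasure ρ]
    (hρ : IsBetaStacyUrnLaw α β ρ) (tv : ℕ → ℕ+) (n : ℕ) :
    ρ (prefixCylinder (n + 1) tv) =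
      ρ (prefixCylinder n tv) * urnPredictive α β tv n (tv n).natPred := by
  set t := (tv n).natPred
  have hq := urnHazard_le_one (α := α) (β := β) tv n t.succPNat
  have hfin : ρ (prefixCylinder n tv) * ∏ j ∈ range t, (1 - urnHazard α β tv n j.succPNat) ≠ ∞ :=
    hρ n t tv ▸ measure_ne_top ρ _
  have hlt : MeasurableSet {ω : ℕ → ℕ+ | t + 1 < (ω n : ℕ)} :=
    show MeasurableSet ((fun ω : ℕ → ℕ+ => ω n) ⁻¹' {x : ℕ+ | t + 1 < (x : ℕ)}) from
      measurable_pi_apply n .of_discrete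
  have hsub : prefixCylinder n tv ∩ {ω | t + 1 < (ω n : ℕ)} ⊆
      prefixCylinder n tv ∩ {ω | t < (ω n : ℕ)} :=
    Set.inter_subset_inter_right _ fun ω h => by simp_all only [Set.mem_ofPred_eq]; omega
  rw [prefixCylinder_succ, measure_sdiff hsub
      ((measurableSet_prefixCylinder n tv).inter hlt).nullMeasurableSet (measure_ne_top ρ _),
    hρ, hρ, prod_range_succ, ← mul_assoc,
    ENNReal.sub_mul_one_sub hfin hq, urnPredictive, mul_assoc]

lemma urnWeight_counts_succ {s : ℕ+} (hα : α s ≠ ∞) (hβ : β s ≠ ∞) (hαβ : α s + β s ≠ 0)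
    (tv : ℕ → ℕ+) (n : ℕ) :
    urnWeight (α s) (β s) (dCount tv (n + 1) s) (wCount tv (n + 1) s) =
      urnWeight (α s) (β s) (dCount tv n s) (wCount tv n s) *
        if s < tv n then 1 - urnHazard α β tv n s
        else if s = tv n then urnHazard α β tv n s else 1 := by
  rw [dCount_succ, wCount_succ]
  rcases lt_trichotomy s (tv n) with h | rfl | h
  · rw [if_neg h.ne', if_pos h, if_pos h, add_zero]
    exact urnWeight_succ_right _ _ hα hβ hαβ
  · rw [if_pos rfl, if_neg (lt_irrefl _), if_neg (lt_irrefl _), if_pos rfl, add_zero]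
    exact urnWeight_succ_left _ _ hαβ
  · rw [if_neg h.ne, if_neg h.not_gt, if_neg h.not_gt, if_neg h.ne', add_zero, add_zero, mul_one]

lemma tprod_urnWeight_counts_succ (hα : ∀ s, α s ≠ ∞) (hβ : ∀ s, β s ≠ ∞)
    (hαβ : ∀ s, α s + β s ≠ 0) (tv : ℕ → ℕ+) (n : ℕ) :
    ∏' s, urnWeight (α s) (β s) (dCount tv (n + 1) s) (wCount tv (n + 1) s) =
      (∏' s, urnWeight (α s) (β s) (dCount tv n s) (wCount tv n s)) *
        urnPredictive α β tv n (tv n).natPred := by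
  set N := ∑ i ∈ range (n + 1), (tv i : ℕ)
  have hN : ∀ i < n + 1, (tv i).natPred < N := fun i hi =>
    (Nat.sub_lt (tv i).pos one_pos).trans_le
      (single_le_sum (f := fun i => (tv i : ℕ)) (fun _ _ => Nat.zero_le _) (mem_range.2 hi))
  have hone : ∀ m ≤ n + 1, ∀ s : ℕ+, N ≤ s.natPred →
      urnWeight (α s) (β s) (dCount tv m s) (wCount tv m s) = 1 := fun m hm s hs => by
    have hlt : ∀ i < m, tv i < s := fun i hi =>
      PNat.natPred_lt_natPred.1 ((hN i (hi.trans_le hm)).trans_le hs)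
    rw [dCount_eq_zero hlt, wCount_eq_zero hlt, urnWeight_zero_zero]
  rw [tprod_pnat_eq_prod_range (hone _ le_rfl), tprod_pnat_eq_prod_range (hone _ n.le_succ),
    urnPredictive, ← prod_range_ite_lt_ite_eq (fun j => 1 - urnHazard α β tv n j.succPNat)
      (fun j => urnHazard α β tv n j.succPNat) (hN n n.lt_succ_self), ← prod_mul_distrib]
  refine prod_congr rfl fun j _ => ?_
  rw [urnWeight_counts_succ (hα _) (hβ _) (hαβ _)]
  conv_lhs => rw [← PNat.succPNat_natPred (tv n)]
  simp only [Nat.succPNat_lt_succPNat, Nat.succPNat_inj]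

theorem measure_prefixCylinder_eq_tprod {ρ : Measure (ℕ → ℕ+)} [IsProbabilityMeasure ρ]
    (hρ : IsBetaStacyUrnLaw α β ρ) (hα : ∀ s, α s ≠ ∞) (hβ : ∀ s, β s ≠ ∞)
    (hαβ : ∀ s, α s + β s ≠ 0) (n : ℕ) (tv : ℕ → ℕ+) :
    ρ (prefixCylinder n tv) = ∏' s, urnWeight (α s) (β s) (dCount tv n s) (wCount tv n s) := by
  induction n with
  | zero => simp [prefixCylinder, dCount, wCount]
  | succ n ih =>
    rw [measure_prefixCylinder_succ hρ, ih, tprod_urnWeight_counts_succ hα hβ hαβ]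

end Urn

lemma card_filter_range_comp_perm {γ : Type*} {n : ℕ} (σ : Equiv.Perm (Fin n)) {f g : ℕ → γ}
    (hfg : ∀ k : Fin n, g k = f (σ k)) (p : γ → Prop) [DecidablePred p] :
    #{i ∈ range n | p (g i)} = #{i ∈ range n | p (f i)} := by
  simp only [card_filter, ← Fin.sum_univ_eq_sum_range, hfg]
  exact Equiv.sum_comp σ fun k => if p (f k) then 1 else 0

lemma setOf_forall_fin_eq_prefixCylinder {n : ℕ} {tv : ℕ → ℕ+} {u : Fin n → ℕ+}
    (h : ∀ k : Fin n, tv k = u k) :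
    {ω : ℕ → ℕ+ | ∀ k : Fin n, ω k = u k} = prefixCylinder n tv := by
  ext ω
  simp only [prefixCylinder, Set.mem_ofPred_eq, ← h, Fin.forall_iff]

lemma survF0_le_tsum (F0 : ℕ+ → ℝ≥0∞) (s : ℕ+) : survF0 F0 s ≤ ∑' r, F0 r :=
  ENNReal.tsum_le_tsum fun r => by split_ifs <;> simp

/-- **finite-dimensional law and exchangeability of the beta-Stacy urn
system.**  For every `n ≥ 1` and `t_{1:n} ∈ ℕ+^n`,
`ρ(T_1 = t_1, …, T_n = t_n) = ∏_{s≥1} α_s^{(d_s)} β_s^{(w_s)} / (α_s+β_s)^{(d_s+w_s)}`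
(ascending factorials; only finitely many factors differ from `1`).  In particular this
probability is invariant under permutations of `(t_1, …, t_n)`, so the generated sequence
is exchangeable. -/
theorem betaStacy_urn_finite_dim_law_and_exchangeable
    (c : ℕ+ → ENNReal) (hc : ∀ s, 0 < c s ∧ c s ≠ ⊤)
    (F0 : ℕ+ → ENNReal) (hF0 : ∀ s, 0 < F0 s) (hF0sum : ∑' s, F0 s = 1)
    (ρ : Measure (ℕ → ℕ+)) [IsProbabilityMeasure ρ]
    (hρ : ∀ (n t : ℕ) (tv : ℕ → ℕ+),
      ρ {ω | (∀ k < n, ω k = tv k) ∧ t < (ω n : ℕ)} =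
        ρ {ω | ∀ k < n, ω k = tv k} *
          ∏ s ∈ Finset.range t,
            (1 - (c s.succPNat * F0 s.succPNat + dCount tv n s.succPNat) /
              (c s.succPNat * F0 s.succPNat + c s.succPNat * survF0 F0 s.succPNat +
                dCount tv n s.succPNat + wCount tv n s.succPNat))) :
    (∀ (n : ℕ) (tv : ℕ → ℕ+),
      ρ {ω | ∀ k < n, ω k = tv k} =
        ∏' s : ℕ+,
          (ascFac (c s * F0 s) (dCount tv n s) * ascFac (c s * survF0 F0 s) (wCount tv n s) /
            ascFac (c s * F0 s + c s * survF0 F0 s) (dCount tv n s + wCount tv n s))) ∧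
    (∀ (n : ℕ) (tv : ℕ → ℕ+) (σ : Equiv.Perm (Fin n)),
      ρ {ω | ∀ k : Fin n, ω (k : ℕ) = tv (k : ℕ)} =
        ρ {ω | ∀ k : Fin n, ω (k : ℕ) = tv ((σ k : Fin n) : ℕ)}) := by
  have hF0_le s : F0 s ≤ 1 := hF0sum ▸ ENNReal.le_tsum s
  have hlaw := measure_prefixCylinder_eq_tprod (α := fun s => c s * F0 s)
    (β := fun s => c s * survF0 F0 s) hρ
    (fun s => ENNReal.mul_ne_top (hc s).2 (ne_top_of_le_ne_top ENNReal.one_ne_top (hF0_le s)))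
    (fun s => ENNReal.mul_ne_top (hc s).2
      (ne_top_of_le_ne_top ENNReal.one_ne_top (hF0sum ▸ survF0_le_tsum F0 s)))
    (fun s h => (ENNReal.mul_pos (hc s).1.ne' (hF0 s).ne').ne' (add_eq_zero.1 h).1)
  refine ⟨hlaw, fun n tv σ => ?_⟩
  let tvσ k := if h : k < n then tv (σ ⟨k, h⟩) else tv k
  have htvσ (k : Fin n) : tvσ k = tv (σ k) := dif_pos k.isLt
  have hd s : dCount tvσ n s = dCount tv n s := card_filter_range_comp_perm σ htvσ (· = s)
  have hw s : wCount tvσ n s = wCount tv n s := card_filter_range_comp_perm σ htvσ (s < ·)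
  rw [setOf_forall_fin_eq_prefixCylinder fun _ => rfl, setOf_forall_fin_eq_prefixCylinder htvσ,
    hlaw, hlaw]
  simp only [hd, hw]
end

section
/- (Recurrence of the beta-Stacy urn system.) For every n ≥ 0 and every fixed t_{1:n} ∈ ℕ₊^n, lim_{t→∞} ∏_{s=1}^t [1 − (α_s + d_s)/(α_s + β_s + d_s + w_s)] = 0, where d_s = #{i ≤ n : t_i = s} and w_s = #{i ≤ n : t_i > s}. Consequently each predictive distribution of the beta-Stacy urn system is a proper probability distribution on ℕ₊: the first urn of the system is recurrent, i.e. each generated holding time T_{n+1} is finite almost surely. -/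
open Filter

/-! For `s` beyond the largest observed value, urn `V_{s+1}` has received no extra balls, so its
factor is `1 - F0({s+1}) / F0((s,∞))` (the constant `c(s+1)` cancels), which equals
`F0((s+1,∞)) / F0((s,∞))`. The product therefore telescopes: from such an `N` on it is at most
`F0((t,∞)) / F0((N,∞))`, which tends to `0` because `F0` has total mass `1`. -/

open Finset ENNReal
open scoped Topology

/-- `∑_{r > t} f r`, indexed by `r = k + t + 1`. -/
noncomputable def tailAbove (f : ℕ+ → ℝ≥0∞) (t : ℕ) : ℝ≥0∞ :=
  ∑' k : ℕ, f (k + t).succPNat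

section tailAbove

variable (f : ℕ+ → ℝ≥0∞)

theorem tailAbove_eq_add (t : ℕ) : tailAbove f t = f t.succPNat + tailAbove f (t + 1) := by
  rw [tailAbove, tsum_eq_zero_add' ENNReal.summable, zero_add, tailAbove]
  simp only [add_right_comm _ 1 t, add_assoc]

theorem tailAbove_le_tsum (t : ℕ) : tailAbove f t ≤ ∑' r, f r :=
  tsum_comp_le_tsum_of_injective (fun _ _ h ↦ by simpa using h) f

theorem tendsto_tailAbove_atTop (hf : ∑' r, f r ≠ ∞) :
    Tendsto (tailAbove f) atTop (𝓝 0) := by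
  refine tendsto_sum_nat_add (fun k ↦ f k.succPNat) ?_
  rwa [← Equiv.pnatEquivNat.symm.tsum_eq f] at hf

theorem tailAbove_pos {f : ℕ+ → ℝ≥0∞} (hf : ∀ r, 0 < f r) (t : ℕ) : 0 < tailAbove f t :=
  (hf _).trans_le (tailAbove_eq_add f t ▸ le_self_add)

theorem survF0_succPNat (s : ℕ) : survF0 f s.succPNat = tailAbove f (s + 1) := by
  rw [survF0, ← Equiv.pnatEquivNat.symm.tsum_eq, tailAbove]
  refine ((add_left_injective (s + 1)).tsum_eq fun k hk ↦ ?_).symm.trans ?_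
  · have hsk : s < k := by
      by_contra hks
      exact hk (if_neg (by simpa [← PNat.coe_lt_coe] using hks))
    exact ⟨k - (s + 1), Nat.sub_add_cancel hsk⟩
  · refine tsum_congr fun k ↦ if_pos ?_
    simp [← PNat.coe_lt_coe]

end tailAbove

theorem ENNReal.one_sub_div_mul_of_add_eq {p q r : ℝ≥0∞} (h : p + q = r) (hr₀ : r ≠ 0)
    (hr : r ≠ ∞) : (1 - p / r) * r = q := by
  subst h
  rw [ENNReal.sub_mul fun _ _ ↦ hr, one_mul, ENNReal.div_mul_cancel hr₀ hr,
    ENNReal.add_sub_cancel_left (add_ne_top.1 hr).1]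

theorem tendsto_prod_range_zero_of_mul_eq {a g : ℕ → ℝ≥0∞} {N : ℕ} (ha : ∀ s, a s ≤ 1)
    (hag : ∀ s, N ≤ s → a s * g s = g (s + 1)) (hgN₀ : g N ≠ 0) (hgN : g N ≠ ∞)
    (hg : Tendsto g atTop (𝓝 0)) :
    Tendsto (fun t ↦ ∏ s ∈ range t, a s) atTop (𝓝 0) := by
  have telescope : ∀ t, N ≤ t → (∏ s ∈ Ico N t, a s) * g N = g t := by
    intro t ht
    induction t, ht using Nat.le_induction with
    | base => simp
    | succ t ht ih => rw [prod_Ico_succ_top ht, mul_right_comm, ih, mul_comm, hag t ht]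
  have bound : ∀ t, N ≤ t → ∏ s ∈ range t, a s ≤ g t / g N := by
    intro t ht
    rw [← prod_range_mul_prod_Ico a ht, ← telescope t ht, ENNReal.mul_div_cancel_right hgN₀ hgN]
    exact mul_le_of_le_one_left' (prod_le_one' fun s _ ↦ ha s)
  have hlim : Tendsto (fun t ↦ g t / g N) atTop (𝓝 0) := by
    simpa using ENNReal.Tendsto.div_const hg (Or.inr hgN₀)
  exact tendsto_nhds_bot_mono hlim ((eventually_ge_atTop N).mono bound)

/-- **recurrence of the beta-Stacy urn system.**  For every `n ≥ 0` and
every fixed `t_{1:n} ∈ ℕ+^n`,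
`∏_{s=1}^t [1 - (α_s + d_s)/(α_s + β_s + d_s + w_s)] → 0` as `t → ∞`.
Consequently each predictive distribution of the beta-Stacy urn system is a proper
probability distribution on `ℕ+`: the first urn of the system is recurrent, i.e. each
generated holding time `T_{n+1}` is finite almost surely. -/
theorem betaStacy_urn_recurrent
    (c : ℕ+ → ENNReal) (hc : ∀ s, 0 < c s ∧ c s ≠ ⊤)
    (F0 : ℕ+ → ENNReal) (hF0 : ∀ s, 0 < F0 s) (hF0sum : ∑' s, F0 s = 1)
    (n : ℕ) (tv : Fin n → ℕ+) :
    Tendsto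
      (fun t : ℕ => ∏ s ∈ Finset.range t,
        (1 - (c s.succPNat * F0 s.succPNat +
            (Finset.univ.filter (fun i : Fin n => tv i = s.succPNat)).card) /
          (c s.succPNat * F0 s.succPNat + c s.succPNat * survF0 F0 s.succPNat +
            (Finset.univ.filter (fun i : Fin n => tv i = s.succPNat)).card +
            (Finset.univ.filter (fun i : Fin n => s.succPNat < tv i)).card)))
      atTop (nhds 0) := by
  have hF0fin : ∑' s, F0 s ≠ ∞ := hF0sum ▸ one_ne_top
  have htail_fin t : tailAbove F0 t ≠ ∞ := ((tailAbove_le_tsum F0 t).trans_lt hF0fin.lt_top).ne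
  set N := univ.sup fun i ↦ (tv i : ℕ)
  refine tendsto_prod_range_zero_of_mul_eq (N := N) (fun _ ↦ tsub_le_self) (fun s hs ↦ ?_)
    (tailAbove_pos hF0 N).ne' (htail_fin N) (tendsto_tailAbove_atTop F0 hF0fin)
  have hobs i : (tv i : ℕ) < s.succPNat :=
    (le_sup (f := fun i ↦ (tv i : ℕ)) (mem_univ i)).trans_lt (hs.trans_lt s.lt_succ_self)
  have hblack : univ.filter (fun i ↦ tv i = s.succPNat) = ∅ :=
    filter_false_of_mem fun i _ h ↦ (hobs i).ne (congrArg _ h)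
  have hwhite : univ.filter (fun i ↦ s.succPNat < tv i) = ∅ :=
    filter_false_of_mem fun i _ h ↦ (hobs i).not_gt h
  rw [hblack, hwhite, card_empty, Nat.cast_zero, add_zero, add_zero, add_zero, ← mul_add,
    ENNReal.mul_div_mul_left _ _ (hc _).1.ne' (hc _).2, survF0_succPNat, ← tailAbove_eq_add]
  exact one_sub_div_mul_of_add_eq (tailAbove_eq_add F0 s).symm (tailAbove_pos hF0 s).ne'
    (htail_fin s)
end
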